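/- arXiv:1807.01004 — 3 statements merged into one kernel-verified Lean document; each statement's English description precedes it below -/
import Mathlib

section
/- Silent steps of the monitored system are silent steps of the system on non-violating systems: let φ ∈ SHMLnf be closed and guarded and let p be a system such that every trace is non-violating for p with respect to φ (for all t ∈ Act*, ¬(p ⊨v^t φ)). If ⟦φ⟧e[p] -τ-> e'[p'] then p -τ-> p', e' = ⟦φ⟧e, and every trace is non-violating for p' with respect to φ (for all t ∈ Act*, ¬(p' ⊨v^t φ)). -/
set_option autoImplicit false

/-- A labelled transition system over observable actions `Act`;
`none` plays the role of the silent action τ. -/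
structure LTS (Act : Type) where
  S : Type
  Tr : S → Option Act → S → Prop

namespace Enf

open scoped Classical

variable {Act : Type}

/-- Zero or more silent steps. -/
def TauStar (L : LTS Act) : L.S → L.S → Prop :=
  Relation.ReflTransGen (fun p q => L.Tr p none q)

/-- The weak transition `p =a=> q`. -/
def WStep (L : LTS Act) (p : L.S) (a : Act) (q : L.S) : Prop :=
  ∃ p₁ p₂, TauStar L p p₁ ∧ L.Tr p₁ (some a) p₂ ∧ TauStar L p₂ q

/-- Weak trace `p =t=> q`. -/
inductive WTrace (L : LTS Act) : L.S → List Act → L.S → Prop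
  | nil {p q : L.S} : TauStar L p q → WTrace L p [] q
  | cons {p r q : L.S} {a : Act} {t : List Act} :
      WStep L p a r → WTrace L r t q → WTrace L p (a :: t) q

/-- SHML formulas: truth, falsehood, fixpoint variables, finite conjunctions,
modalities `[η]φ` (a guard set of actions together with an action-indexed
continuation, representing the symbolic action and the matching substitutions),
and greatest fixpoints. -/
inductive Frm (Act : Type) : Type where
  | tt : Frm Act
  | ff : Frm Act
  | var : ℕ → Frm Act
  | conj : (n : ℕ) → (Fin n → Frm Act) → Frm Act
  | box : Set Act → (Act → Frm Act) → Frm Act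
  | max : ℕ → Frm Act → Frm Act

namespace Frm

/-- Free fixpoint variables. -/
def fv : Frm Act → Set ℕ
  | .tt => ∅
  | .ff => ∅
  | .var X => {X}
  | .conj _ f => ⋃ i, fv (f i)
  | .box G k => ⋃ a ∈ G, fv (k a)
  | .max X φ => fv φ \ {X}

def Closed (φ : Frm Act) : Prop := fv φ = ∅

/-- Substitution `φ[ψ/X]` (of a closed formula `ψ`). -/
def subst : Frm Act → ℕ → Frm Act → Frm Act
  | .tt, _, _ => .tt
  | .ff, _, _ => .ff
  | .var Y, X, ψ => if Y = X then ψ else .var Y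
  | .conj n f, X, ψ => .conj n (fun i => subst (f i) X ψ)
  | .box G k, X, ψ => .box G (fun a => subst (k a) X ψ)
  | .max Y φ, X, ψ => if Y = X then .max Y φ else .max Y (subst φ X ψ)

/-- The normal-form fragment SHMLnf: conjunctions are conjunctions of
modalities with pairwise-disjoint guards, and each greatest fixpoint binds a
variable occurring free in its body. -/
inductive IsNF : Frm Act → Prop
  | tt : IsNF .tt
  | ff : IsNF .ff
  | var (X : ℕ) : IsNF (.var X)
  | conj (n : ℕ) (G : Fin n → Set Act) (k : Fin n → Act → Frm Act)
      (hdisj : ∀ i j : Fin n, i ≠ j → ∀ a : Act, a ∈ G i → a ∉ G j)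
      (hk : ∀ i : Fin n, ∀ a ∈ G i, IsNF (k i a)) :
      IsNF (.conj n fun i => .box (G i) (k i))
  | max (X : ℕ) (φ : Frm Act) (hfree : X ∈ fv φ) (hφ : IsNF φ) : IsNF (.max X φ)

/-- `gvar X φ`: the variable `X` does not occur unguarded (i.e. outside every
modality) in `φ`. -/
def gvar (X : ℕ) : Frm Act → Prop
  | .tt => True
  | .ff => True
  | .var Y => Y ≠ X
  | .conj _ f => ∀ i, gvar X (f i)
  | .box _ _ => True
  | .max Y φ => Y = X ∨ gvar X φ

/-- A formula is guarded if every occurrence of a fixpoint variable lies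
beneath a modality. -/
def Guarded : Frm Act → Prop
  | .tt => True
  | .ff => True
  | .var _ => True
  | .conj _ f => ∀ i, Guarded (f i)
  | .box G k => ∀ a ∈ G, Guarded (k a)
  | .max X φ => gvar X φ ∧ Guarded φ

/-- Number of top-level greatest-fixpoint binders. -/
def topMax : Frm Act → ℕ
  | .max _ φ => topMax φ + 1
  | _ => 0

end Frm

/-- Denotational semantics of (possibly open) formulas, relative to an
environment mapping fixpoint variables to sets of states; `max` is interpreted
as the greatest fixpoint of the induced monotone map. -/
def sem (L : LTS Act) : Frm Act → (ℕ → Set L.S) → Set L.S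
  | .tt, _ => Set.univ
  | .ff, _ => ∅
  | .var X, ρ => ρ X
  | .conj _ f, ρ => ⋂ i, sem L (f i) ρ
  | .box G k, ρ => {p | ∀ a ∈ G, ∀ q, WStep L p a q → q ∈ sem L (k a) ρ}
  | .max X φ, ρ => ⋃₀ {S | S ⊆ sem L φ (Function.update ρ X S)}

/-- Semantics of closed formulas. -/
def Sem (L : LTS Act) (φ : Frm Act) : Set L.S := sem L φ fun _ => ∅

/-- Satisfiability. -/
def SatIn (L : LTS Act) (φ : Frm Act) : Prop := (Sem L φ).Nonempty

/-- The violation relation `p ⊨v^t φ`, defined as the least relation closed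
under the given rules. -/
inductive Viol (L : LTS Act) : L.S → List Act → Frm Act → Prop
  | ff (p : L.S) : Viol L p [] .ff
  | conj {p : L.S} {t : List Act} {n : ℕ} {f : Fin n → Frm Act} (j : Fin n) :
      Viol L p t (f j) → Viol L p t (.conj n f)
  | box {p p' : L.S} {t : List Act} {a : Act} {G : Set Act} {k : Act → Frm Act} :
      a ∈ G → WStep L p a p' → Viol L p' t (k a) → Viol L p (a :: t) (.box G k)
  | max {p : L.S} {t : List Act} {X : ℕ} {φ : Frm Act} :
      Viol L p t (Frm.subst φ X (.max X φ)) → Viol L p t (.max X φ)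

/-- Transducers (enforcement monitors): identity, symbolic transformation
prefixes (a guard set of extended input actions, with `none` standing for the
insertion pattern •, an output per matched input, with `none` standing for τ,
and a continuation per matched input), finite selections, recursion, and
recursion variables. -/
inductive Trn (Act : Type) : Type where
  | id : Trn Act
  | prf : Set (Option Act) → (Option Act → Option Act) → (Option Act → Trn Act) → Trn Act
  | sel : (n : ℕ) → (Fin n → Trn Act) → Trn Act
  | fix : ℕ → Trn Act → Trn Act
  | var : ℕ → Trn Act

namespace Trn

def tsubst : Trn Act → ℕ → Trn Act → Trn Act
  | .id, _, _ => .id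
  | .prf G out k, x, s => .prf G out fun γ => tsubst (k γ) x s
  | .sel n f, x, s => .sel n fun i => tsubst (f i) x s
  | .fix y e, x, s => if y = x then .fix y e else .fix y (tsubst e x s)
  | .var y, x, s => if y = x then s else .var y

end Trn

/-- Transducer transitions: labels are pairs (input, output) where input
`none` is the insertion pattern • and output `none` is τ. -/
inductive TStep : Trn Act → Option Act × Option Act → Trn Act → Prop
  | id (a : Act) : TStep .id (some a, some a) .id
  | prf {G : Set (Option Act)} {out : Option Act → Option Act}
      {k : Option Act → Trn Act} {γ : Option Act} (h : γ ∈ G) :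
      TStep (.prf G out k) (γ, out γ) (k γ)
  | sel {n : ℕ} {f : Fin n → Trn Act} {l : Option Act × Option Act}
      {e' : Trn Act} (i : Fin n) (h : TStep (f i) l e') :
      TStep (.sel n f) l e'
  | fix {x : ℕ} {e : Trn Act} {l : Option Act × Option Act} {e' : Trn Act}
      (h : TStep (Trn.tsubst e x (.fix x e)) l e') :
      TStep (.fix x e) l e'

/-- Instrumentation of a transducer on a system. -/
inductive IStep (L : LTS Act) : Trn Act × L.S → Option Act → Trn Act × L.S → Prop
  | trn {e e' : Trn Act} {p p' : L.S} {a : Act} {μ : Option Act} :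
      L.Tr p (some a) p' → TStep e (some a, μ) e' → IStep L (e, p) μ (e', p')
  | asy {e : Trn Act} {p p' : L.S} :
      L.Tr p none p' → IStep L (e, p) none (e, p')
  | ins {e e' : Trn Act} {p : L.S} {μ : Option Act} :
      TStep e (none, μ) e' → IStep L (e, p) μ (e', p)
  | ter {e : Trn Act} {p p' : L.S} {a : Act} :
      L.Tr p (some a) p' →
      (∀ μ e', ¬ TStep e (some a, μ) e') →
      (∀ μ e', ¬ TStep e (none, μ) e') →
      IStep L (e, p) (some a) (Trn.id, p')

/-- The LTS of monitored systems `e[p]`. -/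
def instLTS (L : LTS Act) : LTS Act := ⟨Trn Act × L.S, IStep L⟩

/-- Strong bisimulations between (the state spaces of) two LTSs. -/
def IsBisim (L₁ L₂ : LTS Act) (R : L₁.S → L₂.S → Prop) : Prop :=
  ∀ s r, R s r →
    (∀ μ s', L₁.Tr s μ s' → ∃ r', L₂.Tr r μ r' ∧ R s' r') ∧
    (∀ μ r', L₂.Tr r μ r' → ∃ s', L₁.Tr s μ s' ∧ R s' r')

/-- Strong bisimilarity. -/
def Bisim (L₁ L₂ : LTS Act) (s : L₁.S) (r : L₂.S) : Prop :=
  ∃ R, IsBisim L₁ L₂ R ∧ R s r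

/-- The synthesis function `⟦-⟧e` from SHMLnf formulas to transducers:
formula variable `X` becomes monitor variable `X+1`; `tt` and `ff` become the
identity monitor; `max X.φ` becomes the corresponding recursive monitor; and a
normalised conjunction of modalities becomes a recursive selection (on the
fresh variable `0`) of symbolic prefixes that suppress (output τ, continue as
the recursion variable) actions whose continuation formula is `ff` and pass
through all other matched actions, continuing with the synthesis of the
respective continuation formula. -/
noncomputable def synth : Frm Act → Trn Act
  | .tt => .id
  | .ff => .id
  | .var X => .var (X + 1)
  | .max X φ => .fix (X + 1) (synth φ)
  | .box G k =>
      .prf {γ | ∃ a ∈ G, γ = some a}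
        (fun γ =>
          match γ with
          | some a => if k a = Frm.ff then none else some a
          | none => none)
        (fun γ =>
          match γ with
          | some a => if k a = Frm.ff then Trn.var 0 else synth (k a)
          | none => .id)
  | .conj n f => .fix 0 (.sel n fun i => synth (f i))

/-- Fuelled residual function (the fuel is consumed by fixpoint unfoldings;
on guarded closed SHMLnf formulas `topMax φ + 1` units of fuel suffice). -/
noncomputable def afterFuel : ℕ → Frm Act → Act → Frm Act
  | 0, _, _ => .tt
  | n + 1, φ, a =>
    match φ with
    | .max X ψ => afterFuel n (Frm.subst ψ X (.max X ψ)) a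
    | .conj m f =>
        if h : ∃ i : Fin m, ∃ G : Set Act, ∃ k : Act → Frm Act,
            f i = Frm.box G k ∧ a ∈ G
        then h.choose_spec.choose_spec.choose a
        else .tt
    | ψ => ψ

/-- The residual `after(φ, a)` of a guarded closed SHMLnf formula. -/
noncomputable def after (φ : Frm Act) (a : Act) : Frm Act :=
  afterFuel (Frm.topMax φ + 1) φ a

/-- Satisfaction relations (the coinductive rules of `⊨s`). -/
def IsSatRel (L : LTS Act) (R : L.S → Frm Act → Prop) : Prop :=
  (∀ p, ¬ R p .ff) ∧
  (∀ p (n : ℕ) (f : Fin n → Frm Act), R p (.conj n f) → ∀ i, R p (f i)) ∧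
  (∀ p (G : Set Act) (k : Act → Frm Act), R p (.box G k) →
      ∀ a ∈ G, ∀ q, WStep L p a q → R q (k a)) ∧
  (∀ p (X : ℕ) (φ : Frm Act), R p (.max X φ) → R p (Frm.subst φ X (.max X φ)))

/-- The largest satisfaction relation `⊨s`. -/
def SatCo (L : LTS Act) (p : L.S) (φ : Frm Act) : Prop :=
  ∃ R, IsSatRel L R ∧ R p φ

/-!
A τ-output of `⟦φ⟧e[p]` is either an asynchronous τ-step of `p` or a suppression by
`⟦φ⟧e` (which never inserts). A suppression only happens at an action `a` guarded by a
modality with continuation `ff`, so `p ⊨v^[a] φ`, which is excluded. Violations are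
closed under τ-predecessors, so `p'` is non-violating as well.
-/

namespace Frm

theorem mem_fv_subst {φ χ : Frm Act} {X Y : ℕ} (hY : Y ∈ φ.fv) (hne : Y ≠ X) :
    Y ∈ (φ.subst X χ).fv := by
  induction φ with
  | tt | ff => simp [fv] at hY
  | var Z =>
    obtain rfl : Y = Z := hY
    simp [subst, hne, fv]
  | conj n f ih =>
    obtain ⟨i, hi⟩ := Set.mem_iUnion.mp hY
    exact Set.mem_iUnion.mpr ⟨i, ih i hi⟩
  | box G k ih =>
    obtain ⟨a, ha, hk⟩ := Set.mem_iUnion₂.mp hY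
    exact Set.mem_iUnion₂.mpr ⟨a, ha, ih a hk⟩
  | max Z ψ ih =>
    obtain ⟨hψ, hYZ⟩ := hY
    by_cases hZ : Z = X
    · simpa [subst, hZ, fv] using And.intro hψ hYZ
    · simpa [subst, hZ, fv] using And.intro (ih hψ) hYZ

theorem IsNF.subst {φ χ : Frm Act} {X : ℕ} (hφ : φ.IsNF) (hχ : χ.IsNF) :
    (φ.subst X χ).IsNF := by
  induction hφ with
  | tt => exact .tt
  | ff => exact .ff
  | var Y =>
    by_cases h : Y = X
    · simpa [Frm.subst, h] using hχ
    · simpa [Frm.subst, h] using IsNF.var Y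
  | conj n G k hdisj _ ih => exact .conj n G _ hdisj ih
  | max Y ψ hfree hψ ih =>
    by_cases h : Y = X
    · simpa [Frm.subst, h] using IsNF.max Y ψ hfree hψ
    · simpa [Frm.subst, h] using IsNF.max Y _ (mem_fv_subst hfree h) ih

theorem eq_ff_of_subst_eq_ff {φ χ : Frm Act} {X : ℕ} (hχ : χ ≠ .ff)
    (h : φ.subst X χ = .ff) : φ = .ff := by
  cases φ with
  | ff => rfl
  | var Y =>
    by_cases hY : Y = X
    · simp [subst, hY, hχ] at h
    · simp [subst, hY] at h
  | max Y ψ => by_cases hY : Y = X <;> simp [subst, hY] at h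
  | _ => simp [subst] at h

end Frm

/-- Synthesis commutes with substitution; `ff` is excluded because `⟦-⟧e` treats a
syntactic `ff` continuation (suppression) differently from one that only becomes `ff`
after substitution. -/
theorem synth_subst (φ : Frm Act) (X : ℕ) {χ : Frm Act} (hχ : χ ≠ .ff) :
    (synth φ).tsubst (X + 1) (synth χ) = synth (φ.subst X χ) := by
  have hsubst_ff (ψ : Frm Act) : ψ.subst X χ = .ff ↔ ψ = .ff :=
    ⟨Frm.eq_ff_of_subst_eq_ff hχ, by rintro rfl; rfl⟩
  induction φ with
  | tt | ff => rfl
  | var Y => by_cases h : Y = X <;> simp [synth, Trn.tsubst, Frm.subst, h]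
  | conj n f ih => simp [synth, Trn.tsubst, Frm.subst, ih]
  | box G k ih =>
    simp only [synth, Trn.tsubst, Frm.subst, Trn.prf.injEq, true_and]
    constructor <;> funext γ <;> rcases γ with _ | a
    · rfl
    · simp [hsubst_ff]
    · rfl
    · by_cases hk : k a = .ff
      · simp [hk, Frm.subst, Trn.tsubst]
      · simp [hk, hsubst_ff, ih]
  | max Y ψ ih =>
    by_cases h : Y = X
    · simp [synth, Trn.tsubst, Frm.subst, h]
    · simp [synth, Trn.tsubst, Frm.subst, h, ih]

theorem synth_unfold (X : ℕ) (ψ : Frm Act) :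
    (synth ψ).tsubst (X + 1) (synth (.max X ψ)) = synth (ψ.subst X (.max X ψ)) :=
  synth_subst ψ X nofun

theorem WStep.of_tr {L : LTS Act} {p p' : L.S} {a : Act} (h : L.Tr p (some a) p') :
    WStep L p a p' :=
  ⟨p, p', .refl, h, .refl⟩

theorem WStep.tau_head {L : LTS Act} {p p' q : L.S} {a : Act} (hτ : L.Tr p none p')
    (h : WStep L p' a q) : WStep L p a q :=
  let ⟨p₁, p₂, hpre, hvis, hpost⟩ := h
  ⟨p₁, p₂, .head hτ hpre, hvis, hpost⟩

theorem Viol.of_tau_step {L : LTS Act} {p p' : L.S} {t : List Act} {φ : Frm Act}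
    (hτ : L.Tr p none p') (h : Viol L p' t φ) : Viol L p t φ := by
  induction h generalizing p with
  | ff => exact .ff p
  | conj j _ ih => exact .conj j (ih hτ)
  | box ha hw hv _ => exact .box ha (hw.tau_head hτ) hv
  | max _ ih => exact .max (ih hτ)

/-- `⟦φ⟧e` suppresses an action only where a modality guarding it has continuation `ff`. -/
theorem synth_step (L : LTS Act) {φ : Frm Act} (hφ : φ.IsNF)
    {l : Option Act × Option Act} {e : Trn Act} (h : TStep (synth φ) l e) :
    ∃ a, l.1 = some a ∧ (l.2 = none → ∀ p p', WStep L p a p' → Viol L p [a] φ) := by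
  generalize hs : synth φ = s at h
  induction h generalizing φ with
  | id a => exact ⟨a, rfl, nofun⟩
  | prf | sel => cases hφ <;> cases hs
  | fix hstep ih =>
    cases hφ with
    | tt | ff | var => cases hs
    | max X ψ hfree hψ =>
      cases hs
      obtain ⟨a, hin, hsup⟩ :=
        ih (hψ.subst (.max X ψ hfree hψ)) (synth_unfold X ψ).symm
      exact ⟨a, hin, fun hτ p p' hw => .max (hsup hτ p p' hw)⟩
    | conj n G k _ _ =>
      cases hs
      simp only [Trn.tsubst] at hstep
      cases hstep with | sel i hstep => ?_
      simp only [synth, Trn.tsubst] at hstep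
      cases hstep with | prf hγ => ?_
      obtain ⟨a, ha, rfl⟩ := hγ
      refine ⟨a, rfl, fun hτ p p' hw => ?_⟩
      have hff : k i a = .ff := by
        by_contra hff
        simp [hff] at hτ
      exact .conj i (.box ha hw (hff ▸ .ff p'))

theorem silent_step_reflects_general (Act : Type) (L : LTS Act) (φ : Frm Act)
    (hnf : φ.IsNF)
    (p p' : L.S) (e' : Trn Act)
    (hnv : ∀ t : List Act, ¬ Viol L p t φ)
    (hstep : IStep L (synth φ, p) none (e', p')) :
    L.Tr p none p' ∧ e' = synth φ ∧ ∀ t : List Act, ¬ Viol L p' t φ := by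
  cases hstep with
  | trn hvis hsup =>
    obtain ⟨_, ⟨⟩, hviol⟩ := synth_step L hnf hsup
    exact (hnv _ (hviol rfl p p' (.of_tr hvis))).elim
  | asy hτ => exact ⟨hτ, rfl, fun t hv => hnv t (hv.of_tau_step hτ)⟩
  | ins hins => simpa using synth_step L hnf hins

/-- silent steps of the monitored system are silent steps of the
system on non-violating systems: for closed guarded SHMLnf φ, if every trace is
non-violating for p and ⟦φ⟧e[p] -τ-> e'[p'], then p -τ-> p', e' = ⟦φ⟧e, and
every trace is non-violating for p'. -/
theorem silent_step_reflects (Act : Type) (L : LTS Act) (φ : Frm Act)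
    (hclosed : φ.Closed) (hnf : φ.IsNF) (hguard : φ.Guarded)
    (p p' : L.S) (e' : Trn Act)
    (hnv : ∀ t : List Act, ¬ Viol L p t φ)
    (hstep : IStep L (synth φ, p) none (e', p')) :
    L.Tr p none p' ∧ e' = synth φ ∧ ∀ t : List Act, ¬ Viol L p' t φ :=
  silent_step_reflects_general Act L φ hnf p p' e' hnv hstep

end Enf
end

section
/- Characterisation of satisfaction via violating traces: for every closed formula φ ∈ SHML and every system p, the system p satisfies φ (p ∈ ⟦φ⟧) if and only if p has no violating trace with respect to φ, i.e., for every trace t ∈ Act*, ¬(p ⊨v^t φ). -/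
set_option autoImplicit false

namespace Enf

open scoped Classical

variable {Act : Type}

/-! A violation `Viol L p t φ` refutes `p ∈ Sem L φ` by induction on its derivation, since
`⟦max X.φ⟧` is a post-fixpoint of `S ↦ ⟦φ⟧[X ↦ S]` and, for closed `ψ`,
`⟦φ[ψ/X]⟧ = ⟦φ⟧[X ↦ ⟦ψ⟧]`. Conversely, the states with no violating trace of a closed
`max X.φ` form a post-fixpoint of its body, because every violation of the unfolding is one
of `max X.φ`; this is proved for open bodies under a closing simultaneous substitution. -/

namespace Frm

lemma fv_subset_fv_conj {n : ℕ} (f : Fin n → Frm Act) (i : Fin n) :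
    (f i).fv ⊆ (conj n f).fv :=
  Set.subset_iUnion (fun i => (f i).fv) i

lemma fv_subset_fv_box {G : Set Act} (k : Act → Frm Act) {a : Act} (ha : a ∈ G) :
    (k a).fv ⊆ (box G k).fv :=
  Set.subset_iUnion₂ (s := fun a _ => (k a).fv) a ha

lemma Closed.notMem_fv {φ : Frm Act} (h : φ.Closed) (X : ℕ) : X ∉ φ.fv :=
  h ▸ Set.notMem_empty X

lemma fv_subst (φ : Frm Act) (X : ℕ) (ψ : Frm Act) :
    (φ.subst X ψ).fv ⊆ (φ.fv \ {X}) ∪ ψ.fv := by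
  induction φ with
  | tt | ff => simp [subst, fv]
  | var Y => by_cases h : Y = X <;> simp [subst, fv, h]
  | conj n f ih =>
    simp only [subst, fv, Set.iUnion_subset_iff]
    exact fun i => (ih i).trans
      (Set.union_subset_union_left _ (Set.sdiff_subset_sdiff_left (fv_subset_fv_conj f i)))
  | box G k ih =>
    simp only [subst, fv, Set.iUnion_subset_iff]
    exact fun a ha => (ih a).trans
      (Set.union_subset_union_left _ (Set.sdiff_subset_sdiff_left (fv_subset_fv_box k ha)))
  | max Y φ ih =>
    by_cases h : Y = X
    · simp only [subst, h, if_true, fv]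
      exact Set.subset_union_of_subset_left (by simp) _
    · simp only [subst, h, if_false, fv]
      intro Z hZ
      have := ih hZ.1
      simp only [Set.mem_union, Set.mem_sdiff, Set.mem_singleton_iff] at this hZ ⊢
      tauto

lemma Closed.unfold {X : ℕ} {φ : Frm Act} (h : (Frm.max X φ).Closed) :
    (φ.subst X (.max X φ)).Closed :=
  Set.subset_eq_empty (fv_subst φ X _) (by simp only [Closed, fv] at h ⊢; simp [h])

/-- Simultaneous substitution `φσ` of free variables (not capture-avoiding). -/
def msubst : Frm Act → (ℕ → Frm Act) → Frm Act
  | .tt, _ => .tt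
  | .ff, _ => .ff
  | .var X, σ => σ X
  | .conj n f, σ => .conj n fun i => msubst (f i) σ
  | .box G k, σ => .box G fun a => msubst (k a) σ
  | .max X φ, σ => .max X (msubst φ (Function.update σ X (.var X)))

lemma msubst_var (φ : Frm Act) : φ.msubst .var = φ := by
  induction φ with
  | max X φ ih => simp only [msubst, Function.update_eq_self, ih]
  | _ => simp_all [msubst]

lemma fv_msubst (φ : Frm Act) (σ : ℕ → Frm Act) :
    (φ.msubst σ).fv ⊆ ⋃ Y ∈ φ.fv, (σ Y).fv := by
  induction φ generalizing σ with
  | tt | ff => simp [msubst, fv]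
  | var X => simp [msubst, fv]
  | conj n f ih =>
    simp only [msubst, fv, Set.iUnion_subset_iff]
    intro i
    refine (ih i σ).trans (Set.biUnion_mono (fv_subset_fv_conj f i) fun _ _ => subset_rfl)
  | box G k ih =>
    simp only [msubst, fv, Set.iUnion_subset_iff]
    intro a ha
    refine (ih a σ).trans (Set.biUnion_mono (fv_subset_fv_box k ha) fun _ _ => subset_rfl)
  | max X φ ih =>
    rintro Z ⟨hZ, hZX⟩
    obtain ⟨Y, hY, hZY⟩ := Set.mem_iUnion₂.1 (ih _ hZ)
    have hYX : Y ≠ X := by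
      rintro rfl
      simp only [Function.update_self, fv] at hZY
      exact hZX hZY
    rw [Function.update_of_ne hYX] at hZY
    exact Set.mem_iUnion₂.2 ⟨Y, ⟨hY, hYX⟩, hZY⟩

lemma Closed.msubst {φ : Frm Act} {σ : ℕ → Frm Act} (hσ : ∀ Y ∈ φ.fv, (σ Y).Closed) :
    (φ.msubst σ).Closed :=
  Set.subset_eq_empty (fv_msubst φ σ) <|
    Set.iUnion_eq_empty.2 fun Y => Set.iUnion_eq_empty.2 (hσ Y)

/-- Equality up to the continuations of modalities at actions outside their guards,
which neither `sem` nor `Viol` inspects. -/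
inductive EqOnGuards : Frm Act → Frm Act → Prop
  | tt : EqOnGuards .tt .tt
  | ff : EqOnGuards .ff .ff
  | var (X : ℕ) : EqOnGuards (.var X) (.var X)
  | conj {n : ℕ} {f g : Fin n → Frm Act} :
      (∀ i, EqOnGuards (f i) (g i)) → EqOnGuards (.conj n f) (.conj n g)
  | box {G : Set Act} {k k' : Act → Frm Act} :
      (∀ a ∈ G, EqOnGuards (k a) (k' a)) → EqOnGuards (.box G k) (.box G k')
  | max {X : ℕ} {φ φ' : Frm Act} : EqOnGuards φ φ' → EqOnGuards (.max X φ) (.max X φ')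

@[refl]
lemma EqOnGuards.refl (φ : Frm Act) : EqOnGuards φ φ := by
  induction φ with
  | tt => exact .tt
  | ff => exact .ff
  | var X => exact .var X
  | conj n f ih => exact .conj ih
  | box G k ih => exact .box fun a _ => ih a
  | max X φ ih => exact .max ih

lemma EqOnGuards.subst {φ φ' ψ ψ' : Frm Act} (h : EqOnGuards φ φ') (hψ : EqOnGuards ψ ψ')
    (X : ℕ) : EqOnGuards (φ.subst X ψ) (φ'.subst X ψ') := by
  induction h with
  | tt => exact .tt
  | ff => exact .ff
  | var Y =>
    by_cases hY : Y = X
    · simpa only [Frm.subst, hY, if_true] using hψ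
    · simpa only [Frm.subst, hY, if_false] using EqOnGuards.var Y
  | conj _ ih => exact .conj ih
  | box _ ih => exact .box ih
  | @max Y _ _ h ih =>
    by_cases hY : Y = X
    · simpa only [Frm.subst, hY, if_true] using .max h
    · simpa only [Frm.subst, hY, if_false] using .max ih

lemma eqOnGuards_subst_of_notMem_fv {X : ℕ} {φ : Frm Act} (ψ : Frm Act) (h : X ∉ φ.fv) :
    EqOnGuards φ (φ.subst X ψ) := by
  induction φ with
  | tt => exact .tt
  | ff => exact .ff
  | var Y =>
    have hY : Y ≠ X := fun hYX => h (hYX ▸ rfl)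
    simpa only [Frm.subst, hY, if_false] using .var Y
  | conj n f ih => exact .conj fun i => ih i fun hX => h (fv_subset_fv_conj f i hX)
  | box G k ih => exact .box fun a ha => ih a fun hX => h (fv_subset_fv_box k ha hX)
  | max Y φ ih =>
    by_cases hY : Y = X
    · simp only [Frm.subst, hY, if_true]; rfl
    · simp only [Frm.subst, hY, if_false]
      exact .max (ih fun hX => h ⟨hX, Ne.symm hY⟩)

lemma eqOnGuards_msubst_update {σ : ℕ → Frm Act} {X : ℕ} (ψ : Frm Act) (φ : Frm Act)
    (hX : σ X = .var X) (hσ : ∀ Y ∈ φ.fv, Y ≠ X → X ∉ (σ Y).fv) :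
    EqOnGuards (φ.msubst (Function.update σ X ψ)) ((φ.msubst σ).subst X ψ) := by
  induction φ generalizing σ with
  | tt => exact .tt
  | ff => exact .ff
  | var Z =>
    by_cases hZ : Z = X
    · subst hZ; simp only [msubst, Function.update_self, hX, Frm.subst, if_true]; rfl
    · simp only [msubst, Function.update_of_ne hZ]
      exact eqOnGuards_subst_of_notMem_fv ψ (hσ Z rfl hZ)
  | conj n f ih =>
    exact .conj fun i => ih i hX fun Y hY => hσ Y (fv_subset_fv_conj f i hY)
  | box G k ih =>
    exact .box fun a ha => ih a hX fun Y hY => hσ Y (fv_subset_fv_box k ha hY)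
  | max Y φ ih =>
    by_cases hYX : Y = X
    · subst hYX; simp only [msubst, Function.update_idem, Frm.subst, if_true]; rfl
    · simp only [msubst, Frm.subst, hYX, if_false]
      rw [Function.update_comm (Ne.symm hYX)]
      refine .max (ih (by rwa [Function.update_of_ne (Ne.symm hYX)]) fun Z hZ hZX => ?_)
      by_cases hZY : Z = Y
      · subst hZY; simpa [fv] using Ne.symm hYX
      · rw [Function.update_of_ne hZY]
        exact hσ Z ⟨hZ, hZY⟩ hZX

end Frm

section Semantics

variable (L : LTS Act)

lemma sem_congr (φ : Frm Act) {ρ ρ' : ℕ → Set L.S} (h : ∀ X ∈ φ.fv, ρ X = ρ' X) :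
    sem L φ ρ = sem L φ ρ' := by
  induction φ generalizing ρ ρ' with
  | tt | ff => rfl
  | var X => exact h X rfl
  | conj n f ih =>
    exact Set.iInter_congr fun i => ih i fun X hX => h X (Frm.fv_subset_fv_conj f i hX)
  | box G k ih =>
    ext p
    refine forall₂_congr fun a ha => forall₂_congr fun q _ => ?_
    rw [ih a fun X hX => h X (Frm.fv_subset_fv_box k ha hX)]
  | max X φ ih =>
    refine congrArg Set.sUnion (Set.ext fun S => ?_)
    change S ⊆ _ ↔ S ⊆ _
    rw [ih fun Y hY => ?_]
    by_cases hYX : Y = X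
    · simp [hYX]
    · simp only [Function.update_of_ne hYX]
      exact h Y ⟨hY, hYX⟩

lemma sem_closed {φ : Frm Act} (hφ : φ.Closed) (ρ : ℕ → Set L.S) : sem L φ ρ = Sem L φ :=
  sem_congr L φ fun X hX => absurd hX (hφ.notMem_fv X)

lemma sem_monotone (φ : Frm Act) : Monotone (sem L φ) := by
  induction φ with
  | tt | ff => exact monotone_const
  | var X => exact fun _ _ h => h X
  | conj n f ih => exact fun _ _ h => Set.iInter_mono fun i => ih i h
  | box G k ih => exact fun _ _ h p hp a ha q hq => ih a h (hp a ha q hq)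
  | max X φ ih =>
    rintro ρ ρ' h p ⟨S, hS, hp⟩
    exact ⟨S, hS.trans (ih (update_le_update_iff.2 ⟨le_rfl, fun j _ => h j⟩)), hp⟩

lemma sem_subst (φ : Frm Act) (X : ℕ) {ψ : Frm Act} (hψ : ψ.Closed) (ρ : ℕ → Set L.S) :
    sem L (φ.subst X ψ) ρ = sem L φ (Function.update ρ X (Sem L ψ)) := by
  induction φ generalizing ρ with
  | tt | ff => rfl
  | var Y =>
    by_cases hY : Y = X
    · subst hY
      simpa only [Frm.subst, if_true, sem, Function.update_self] using sem_closed L hψ ρ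
    · simp only [Frm.subst, hY, if_false, sem, Function.update_of_ne hY]
  | conj n f ih => exact Set.iInter_congr fun i => ih i ρ
  | box G k ih =>
    ext p
    exact forall₂_congr fun a _ => forall₂_congr fun q _ => by rw [ih a ρ]
  | max Y φ ih =>
    by_cases hY : Y = X
    · simp only [Frm.subst, hY, if_true]
      exact sem_congr L _ fun Z hZ => (Function.update_of_ne hZ.2 ..).symm
    · simp only [Frm.subst, hY, if_false]
      refine congrArg Set.sUnion (Set.ext fun S => ?_)
      change S ⊆ _ ↔ S ⊆ _
      rw [ih, Function.update_comm (Ne.symm hY)]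

lemma sem_max_subset (X : ℕ) (φ : Frm Act) (ρ : ℕ → Set L.S) :
    sem L (.max X φ) ρ ⊆ sem L φ (Function.update ρ X (sem L (.max X φ) ρ)) := by
  rintro p ⟨S, hS, hp⟩
  exact sem_monotone L φ (update_le_update_iff'.2 (Set.subset_sUnion_of_mem hS)) (hS hp)

end Semantics

section Violation

variable {L : LTS Act}

lemma Viol.of_eqOnGuards {p : L.S} {t : List Act} {φ φ' : Frm Act} (h : Viol L p t φ)
    (he : φ.EqOnGuards φ') : Viol L p t φ' := by
  induction h generalizing φ' with
  | ff p => cases he; exact .ff p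
  | conj j _ ih => cases he with | conj hf => exact .conj j (ih (hf j))
  | box ha hw _ ih => cases he with | box hk => exact .box ha hw (ih (hk _ ha))
  | max _ ih => cases he with | max h => exact .max (ih (h.subst (.max h) _))

lemma Viol.notMem_Sem {p : L.S} {t : List Act} {φ : Frm Act} (h : Viol L p t φ)
    (hφ : φ.Closed) : p ∉ Sem L φ := by
  induction h with
  | ff => exact id
  | conj j _ ih =>
    exact fun hp =>
      ih (Set.subset_eq_empty (Frm.fv_subset_fv_conj _ j) hφ) (Set.mem_iInter.1 hp j)
  | box ha hw _ ih =>
    exact fun hp => ih (Set.subset_eq_empty (Frm.fv_subset_fv_box _ ha) hφ) (hp _ ha _ hw)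
  | @max p t X φ _ ih =>
    intro hp
    apply ih hφ.unfold
    rw [Sem, sem_subst L φ X hφ]
    exact sem_max_subset L X φ _ hp

variable (L) in
def noViol (φ : Frm Act) : Set L.S := {p | ∀ t, ¬ Viol L p t φ}

variable (L) in
lemma noViol_msubst_subset_sem (φ : Frm Act) {σ : ℕ → Frm Act}
    (hσ : ∀ Y ∈ φ.fv, (σ Y).Closed) :
    noViol L (φ.msubst σ) ⊆ sem L φ (noViol L ∘ σ) := by
  induction φ generalizing σ with
  | tt => exact Set.subset_univ _
  | ff => exact fun p hp => hp [] (.ff p)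
  | var X => exact subset_rfl
  | conj n f ih =>
    exact fun p hp => Set.mem_iInter.2 fun i =>
      ih i (fun Y hY => hσ Y (Frm.fv_subset_fv_conj f i hY)) fun t hv => hp t (.conj i hv)
  | box G k ih =>
    exact fun p hp a ha q hq => ih a (fun Y hY => hσ Y (Frm.fv_subset_fv_box k ha hY))
      fun t hv => hp (a :: t) (.box ha hq hv)
  | max X φ ih =>
    set Φ := (Frm.max X φ).msubst σ
    have hσ' : ∀ Y ∈ φ.fv, (Function.update σ X Φ Y).Closed := by
      intro Y hY
      by_cases hYX : Y = X
      · subst hYX; simpa only [Function.update_self] using Frm.Closed.msubst hσ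
      · simpa only [Function.update_of_ne hYX] using hσ Y ⟨hY, hYX⟩
    have unfold : noViol L Φ ⊆ noViol L (φ.msubst (Function.update σ X Φ)) := by
      intro q hq t hv
      have he := Frm.eqOnGuards_msubst_update (σ := Function.update σ X (.var X)) Φ φ
        (Function.update_self ..) fun Y hY hYX => by
          simpa only [Function.update_of_ne hYX] using (hσ Y ⟨hY, hYX⟩).notMem_fv X
      rw [Function.update_idem] at he
      exact hq t (.max (hv.of_eqOnGuards he))
    refine fun p hp => ⟨noViol L Φ, fun q hq => ?_, hp⟩
    rw [← Function.comp_update]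
    exact ih hσ' (unfold hq)

end Violation

/-- characterisation of satisfaction via violating traces: for
closed φ ∈ SHML, p ∈ ⟦φ⟧ iff no trace is violating for p w.r.t. φ. -/
theorem sat_iff_no_violating_trace (Act : Type) (L : LTS Act) (φ : Frm Act)
    (hclosed : φ.Closed) (p : L.S) :
    p ∈ Sem L φ ↔ ∀ t : List Act, ¬ Viol L p t φ := by
  refine ⟨fun hp t hv => hv.notMem_Sem hclosed hp, fun hp => ?_⟩
  have key := noViol_msubst_subset_sem L φ (σ := .var) fun Y hY =>
    absurd hY (hclosed.notMem_fv Y)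
  rw [Frm.msubst_var, sem_closed L hclosed] at key
  exact key hp

end Enf
end

section
/- Suppression blocking (intermediate claim in the proof of Enforcement Soundness): let φ = ⋀_{i∈I}[η_i]φ_i be a closed SHMLnf formula and suppose φ_j = ff for some j ∈ I. Then for every system p and every action a ∈ ⟦η_j⟧, the instrumented system ⟦φ⟧e[p] affords no weak a-transition (¬∃q, ⟦φ⟧e[p] =a=> q): every such action produced by the system is suppressed into τ by the synthesized monitor, so the modal necessities leading to falsehood are never satisfied by the monitored system. -/
set_option autoImplicit false

namespace Enf

open scoped Classical

variable {Act : Type}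

/-!
The monitor synthesised from `⋀_{i} [η_i] φ_i` reacts only to actions in the guards: an
action whose continuation is `ff` is suppressed into τ and the monitor returns to itself,
any other one is passed through. Hence τ-steps of the instrumented system never change the
monitor. A visible `a`-step with `a ∈ η_j` is then impossible: by disjointness of the guards
the monitor never outputs `a`, and `a` cannot escape through rule (iTer) either, because the
monitor does afford a (suppressing) `a`-transition.
-/

namespace Frm

def conjBox {n : ℕ} (G : Fin n → Set Act) (k : Fin n → Act → Frm Act) : Frm Act :=
  .conj n fun i => .box (G i) (k i)

theorem IsNF.conjBox_disjoint {n : ℕ} {G : Fin n → Set Act} {k : Fin n → Act → Frm Act}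
    (h : IsNF (conjBox G k)) {i i' : Fin n} (hii' : i ≠ i') {b : Act} (hb : b ∈ G i) :
    b ∉ G i' := by
  generalize hφ : conjBox G k = φ at h
  cases h with
  | conj _ G' _ hdisj _ =>
    obtain ⟨rfl, hf⟩ := (conj.injEq _ _ _ _).mp hφ
    have hG : G = G' := funext fun i => (box.inj (congrFun (eq_of_heq hf) i)).1
    subst hG
    exact hdisj i i' hii' b hb
  | _ => simp [conjBox] at hφ

end Frm

section conjBox

variable {n : ℕ} {G : Fin n → Set Act} {k : Fin n → Act → Frm Act}

theorem exists_guard_of_tstep_synth_conjBox {l : Option Act × Option Act} {e' : Trn Act}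
    (h : TStep (synth (Frm.conjBox G k)) l e') :
    ∃ i b, b ∈ G i ∧ l.1 = some b ∧
      (k i b = .ff ∧ l.2 = none ∧ e' = synth (Frm.conjBox G k) ∨
        k i b ≠ .ff ∧ l.2 = some b) := by
  cases h with | fix h => ?_
  cases h with | sel i h => ?_
  simp only [synth, Trn.tsubst] at h
  cases h with | prf hγ => ?_
  obtain ⟨b, hb, rfl⟩ := hγ
  refine ⟨i, b, hb, rfl, ?_⟩
  by_cases hkb : k i b = .ff
  · simp [hkb, Trn.tsubst, synth, Frm.conjBox]
  · simp [hkb]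

theorem tstep_synth_conjBox_suppress {j : Fin n} {a : Act} (ha : a ∈ G j) (hka : k j a = .ff) :
    TStep (synth (Frm.conjBox G k)) (some a, none) (synth (Frm.conjBox G k)) := by
  refine .fix (.sel j ?_)
  simp only [synth, Trn.tsubst]
  convert TStep.prf (γ := some a)
    (show some a ∈ {γ | ∃ a ∈ G j, γ = some a} from ⟨a, ha, rfl⟩) using 2 <;>
    simp [hka, Trn.tsubst, synth, Frm.conjBox]

theorem synth_conjBox_eq_of_tstep_silent {γ : Option Act} {e' : Trn Act}
    (h : TStep (synth (Frm.conjBox G k)) (γ, none) e') : e' = synth (Frm.conjBox G k) := by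
  obtain ⟨_, _, _, _, ⟨-, -, he⟩ | ⟨-, hout⟩⟩ := exists_guard_of_tstep_synth_conjBox h
  · exact he
  · cases hout

theorem not_tstep_synth_conjBox_output {a : Act} (hsupp : ∀ i, a ∈ G i → k i a = .ff)
    {γ : Option Act} {e' : Trn Act} : ¬ TStep (synth (Frm.conjBox G k)) (γ, some a) e' := by
  intro h
  obtain ⟨i, b, hb, -, ⟨-, hout, -⟩ | ⟨hkb, hout⟩⟩ := exists_guard_of_tstep_synth_conjBox h
  · cases hout
  · cases hout
    exact hkb (hsupp i hb)

end conjBox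

section instrumentation

variable {L : LTS Act} {e : Trn Act}

theorem fst_eq_of_tauStar_instLTS (hsilent : ∀ γ e', TStep e (γ, none) e' → e' = e)
    {p : L.S} {r : Trn Act × L.S} (h : TauStar (instLTS L) (e, p) r) : r.1 = e := by
  induction h with
  | refl => rfl
  | @tail r' _ _ hstep ih =>
    obtain ⟨e', s⟩ := r'
    obtain rfl : e' = e := ih
    cases hstep with
    | trn _ ht => exact hsilent _ _ ht
    | asy _ => rfl
    | ins ht => exact hsilent _ _ ht

theorem not_istep_of_suppresses {a : Act} (hout : ∀ γ e', ¬ TStep e (γ, some a) e')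
    (hin : ∃ μ e', TStep e (some a, μ) e') {s : L.S} {r : Trn Act × L.S} :
    ¬ IStep L (e, s) (some a) r := by
  intro h
  cases h with
  | trn _ ht => exact hout _ _ ht
  | ins ht => exact hout _ _ ht
  | ter _ hno _ =>
    obtain ⟨μ, e', ht⟩ := hin
    exact hno μ e' ht

theorem not_wStep_instLTS_of_suppresses {a : Act}
    (hsilent : ∀ γ e', TStep e (γ, none) e' → e' = e)
    (hout : ∀ γ e', ¬ TStep e (γ, some a) e') (hin : ∃ μ e', TStep e (some a, μ) e')
    (p : L.S) (q : Trn Act × L.S) : ¬ WStep (instLTS L) (e, p) a q := by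
  rintro ⟨⟨e', s⟩, r, hτ, hstep, -⟩
  obtain rfl : e' = e := fst_eq_of_tauStar_instLTS hsilent hτ
  exact not_istep_of_suppresses hout hin hstep

end instrumentation

theorem suppression_blocking_general (Act : Type) (L : LTS Act) (n : ℕ)
    (G : Fin n → Set Act) (k : Fin n → Act → Frm Act)
    (hnf : Frm.IsNF (Frm.conj n fun i => Frm.box (G i) (k i)))
    (j : Fin n) (hff : ∀ b ∈ G j, k j b = Frm.ff)
    (a : Act) (ha : a ∈ G j) (p : L.S) :
    ¬ ∃ q, WStep (instLTS L)
        (synth (Frm.conj n fun i => Frm.box (G i) (k i)), p) a q := by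
  have hsupp : ∀ i, a ∈ G i → k i a = .ff := fun i hai => by
    obtain rfl : i = j := by_contra fun hij => hnf.conjBox_disjoint hij hai ha
    exact hff a hai
  rintro ⟨q, hq⟩
  exact not_wStep_instLTS_of_suppresses (fun _ _ => synth_conjBox_eq_of_tstep_silent)
    (fun _ _ => not_tstep_synth_conjBox_output hsupp)
    ⟨_, _, tstep_synth_conjBox_suppress ha (hff a ha)⟩ p q hq

/-- suppression blocking: let φ = ⋀_{i∈I}[η_i]φ_i be a closed
SHMLnf formula with φ_j = ff for some j ∈ I. Then for every system p and every
a ∈ ⟦η_j⟧, the instrumented system ⟦φ⟧e[p] affords no weak a-transition. -/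
theorem suppression_blocking (Act : Type) (L : LTS Act) (n : ℕ)
    (G : Fin n → Set Act) (k : Fin n → Act → Frm Act)
    (hclosed : Frm.Closed (Frm.conj n fun i => Frm.box (G i) (k i)))
    (hnf : Frm.IsNF (Frm.conj n fun i => Frm.box (G i) (k i)))
    (j : Fin n) (hff : ∀ b ∈ G j, k j b = Frm.ff)
    (a : Act) (ha : a ∈ G j) (p : L.S) :
    ¬ ∃ q, WStep (instLTS L)
        (synth (Frm.conj n fun i => Frm.box (G i) (k i)), p) a q :=
  suppression_blocking_general Act L n G k hnf j hff a ha p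

end Enf
end
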